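/- arXiv:1806.05044 — 2 statements merged into one kernel-verified Lean document; each statement's English description precedes it below -/
import Mathlib

section
/- Let A = K[[f_1,…,f_s]] ⊆ F = K[[x_1,…,x_n]] with the length of F/A as an A-module finite. For every a ∈ (ℝ_{>0})^n there exists b ∈ (ℚ_{>0})^n (all coordinates positive rationals) such that M(A,a) = M(A,b). -/
noncomputable section

namespace CanonicalFan

open MvPowerSeries

variable (K : Type*) [Field K] (n : ℕ)

/-- The weight `⟨a, α⟩ = ∑ i, a i * α i` of an exponent `α` with respect to `a`. -/
def weight (a : Fin n → ℝ) (α : Fin n →₀ ℕ) : ℝ := ∑ i, a i * (α i : ℝ)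

/-- The support of a formal power series. -/
def supp (f : MvPowerSeries (Fin n) K) : Set (Fin n →₀ ℕ) :=
  {α | MvPowerSeries.coeff (R := K) α f ≠ 0}

/-- The `a`-valuation `ν(f,a)`, with the convention `ν(0,a) = +∞`. -/
def nu (a : Fin n → ℝ) (f : MvPowerSeries (Fin n) K) : EReal :=
  sInf ((fun α => ((weight n a α : ℝ) : EReal)) '' supp K n f)

open Classical in
/-- The `a`-initial form `in(f,a)` of a power series. -/
def initialForm (a : Fin n → ℝ) (f : MvPowerSeries (Fin n) K) :
    MvPowerSeries (Fin n) K :=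
  fun α => if ((weight n a α : ℝ) : EReal) = nu K n a f then MvPowerSeries.coeff (R := K) α f else 0

open Classical in
/-- `exp(f,a)`: the `≺`-maximal element of the support of `in(f,a)`, where `≺` is the
well-ordering `r` (junk value `0` if no maximal element exists). -/
def exponent (r : (Fin n →₀ ℕ) → (Fin n →₀ ℕ) → Prop) (a : Fin n → ℝ)
    (f : MvPowerSeries (Fin n) K) : Fin n →₀ ℕ :=
  if h : ∃ β ∈ supp K n (initialForm K n a f),
      ∀ γ ∈ supp K n (initialForm K n a f), γ = β ∨ r γ β
  then h.choose else 0

/-- The `a`-leading monomial `M(f,a) = c_{exp(f,a)} x^{exp(f,a)}`. -/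
def leadMon (r : (Fin n →₀ ℕ) → (Fin n →₀ ℕ) → Prop) (a : Fin n → ℝ)
    (f : MvPowerSeries (Fin n) K) : MvPowerSeries (Fin n) K :=
  MvPowerSeries.monomial (R := K) (exponent K n r a f)
    (MvPowerSeries.coeff (R := K) (exponent K n r a f) f)

/-- The maximal ideal `(x_1, …, x_n)` of `K[[x_1,…,x_n]]`. -/
def mIdeal : Ideal (MvPowerSeries (Fin n) K) :=
  Ideal.span (Set.range (MvPowerSeries.X : Fin n → MvPowerSeries (Fin n) K))

/-- `K[[S]]`: the smallest `K`-subalgebra of `K[[x_1,…,x_n]]` containing `S` and closed in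
the `(x_1,…,x_n)`-adic topology; concretely, the adic closure of `Algebra.adjoin K S`. -/
def closedAdjoin (S : Set (MvPowerSeries (Fin n) K)) :
    Subalgebra K (MvPowerSeries (Fin n) K) where
  carrier := {f | ∀ N : ℕ, ∃ g ∈ Algebra.adjoin K S, f - g ∈ (mIdeal K n) ^ N}
  algebraMap_mem' c N :=
    ⟨algebraMap K _ c, Subalgebra.algebraMap_mem _ c, by simp [Ideal.zero_mem]⟩
  add_mem' {f g} hf hg N := by
    obtain ⟨p, hp, hfp⟩ := hf N
    obtain ⟨q, hq, hgq⟩ := hg N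
    exact ⟨p + q, add_mem hp hq, by simpa [add_sub_add_comm] using Ideal.add_mem _ hfp hgq⟩
  mul_mem' {f g} hf hg N := by
    obtain ⟨p, hp, hfp⟩ := hf N
    obtain ⟨q, hq, hgq⟩ := hg N
    refine ⟨p * q, mul_mem hp hq, ?_⟩
    have h : f * g - p * q = f * (g - q) + (f - p) * q := by ring
    rw [h]
    exact Ideal.add_mem _ (Ideal.mul_mem_left _ _ hgq) (Ideal.mul_mem_right _ _ hfp)

/-- `exp(A,a) = {exp(f,a) : f ∈ A, f ≠ 0}`. -/
def expSet (r : (Fin n →₀ ℕ) → (Fin n →₀ ℕ) → Prop) (a : Fin n → ℝ)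
    (A : Set (MvPowerSeries (Fin n) K)) : Set (Fin n →₀ ℕ) :=
  {β | ∃ f ∈ A, f ≠ 0 ∧ exponent K n r a f = β}

/-- `in(A,a) = K[[in(f,a) : f ∈ A ∖ {0}]]`. -/
def inAlgebra (a : Fin n → ℝ) (A : Set (MvPowerSeries (Fin n) K)) :
    Subalgebra K (MvPowerSeries (Fin n) K) :=
  closedAdjoin K n {g | ∃ f ∈ A, f ≠ 0 ∧ initialForm K n a f = g}

/-- `M(A,a) = K[[M(f,a) : f ∈ A ∖ {0}]]`. -/
def leadAlgebra (r : (Fin n →₀ ℕ) → (Fin n →₀ ℕ) → Prop) (a : Fin n → ℝ)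
    (A : Set (MvPowerSeries (Fin n) K)) : Subalgebra K (MvPowerSeries (Fin n) K) :=
  closedAdjoin K n {g | ∃ f ∈ A, f ≠ 0 ∧ leadMon K n r a f = g}

set_option synthInstance.maxHeartbeats 1000000 in
/-- The length of `F/A` as an `A`-module is finite. -/
def FiniteColength (A : Subalgebra K (MvPowerSeries (Fin n) K)) : Prop :=
  IsFiniteLength A
    (MvPowerSeries (Fin n) K ⧸ LinearMap.range (Algebra.linearMap A (MvPowerSeries (Fin n) K)))

/-- `{g_1,…,g_r}` is an `a`-canonical basis of `A`. -/
def IsCanonicalBasis (r : (Fin n →₀ ℕ) → (Fin n →₀ ℕ) → Prop) (a : Fin n → ℝ)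
    (A : Subalgebra K (MvPowerSeries (Fin n) K)) {m : ℕ}
    (g : Fin m → MvPowerSeries (Fin n) K) : Prop :=
  (∀ i, g i ∈ A ∧ g i ≠ 0) ∧
    leadAlgebra K n r a (A : Set (MvPowerSeries (Fin n) K)) =
      closedAdjoin K n (Set.range fun i => leadMon K n r a (g i))

/-- `{g_1,…,g_r}` is a minimal `a`-canonical basis of `A`. -/
def IsMinimalCanonicalBasis (r : (Fin n →₀ ℕ) → (Fin n →₀ ℕ) → Prop) (a : Fin n → ℝ)
    (A : Subalgebra K (MvPowerSeries (Fin n) K)) {m : ℕ}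
    (g : Fin m → MvPowerSeries (Fin n) K) : Prop :=
  IsCanonicalBasis K n r a A g ∧
    ∀ T : Set (MvPowerSeries (Fin n) K),
      T ⊂ Set.range (fun i => leadMon K n r a (g i)) →
        closedAdjoin K n T ≠ leadAlgebra K n r a (A : Set (MvPowerSeries (Fin n) K))

/-- `{g_1,…,g_r}` is the `a`-reduced canonical basis of `A`. -/
def IsReducedCanonicalBasis (r : (Fin n →₀ ℕ) → (Fin n →₀ ℕ) → Prop) (a : Fin n → ℝ)
    (A : Subalgebra K (MvPowerSeries (Fin n) K)) {m : ℕ}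
    (g : Fin m → MvPowerSeries (Fin n) K) : Prop :=
  IsMinimalCanonicalBasis K n r a A g ∧
    (∀ i, MvPowerSeries.coeff (R := K) (exponent K n r a (g i)) (g i) = 1) ∧
    ∀ i, ∀ α ∈ supp K n (g i - leadMon K n r a (g i)),
      (MvPowerSeries.monomial (R := K) α (1 : K)) ∉
        closedAdjoin K n (Set.range fun j => leadMon K n r a (g j))

/-- A power series is a (nonzero) monomial. -/
def IsMonomial (g : MvPowerSeries (Fin n) K) : Prop :=
  ∃ (α : Fin n →₀ ℕ) (c : K), c ≠ 0 ∧ g = MvPowerSeries.monomial (R := K) α c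

/-!
Finite colength gives `𝔪 ^ N ⊆ A`, so every monomial of large `a`-weight lies in `A`; being its
own leading monomial for every weight, it lies in `M(A,a)` and in `M(A,b)`. This disposes of all
`f ∈ A` with `ν(f,a)` large. For the others `in(f,a)` is decided by the finitely many exponents of
bounded `a`-weight, and a rational `b` close to `a` satisfying every rational linear relation of `a`
(ties included) gives `in(f,b) = in(f,a)`, hence `M(f,b) = M(f,a)`.
-/

open Filter Topology

section Weight

variable {n : ℕ}

lemma weight_nonneg {a : Fin n → ℝ} (ha : ∀ i, 0 ≤ a i) (α : Fin n →₀ ℕ) : 0 ≤ weight n a α :=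
  Finset.sum_nonneg fun i _ => mul_nonneg (ha i) (Nat.cast_nonneg _)

lemma weight_le_mul_weight {a b : Fin n → ℝ} {c : ℝ} (h : ∀ i, a i ≤ c * b i)
    (α : Fin n →₀ ℕ) : weight n a α ≤ c * weight n b α := by
  rw [weight, weight, Finset.mul_sum]
  refine Finset.sum_le_sum fun i _ => ?_
  rw [← mul_assoc]
  exact mul_le_mul_of_nonneg_right (h i) (Nat.cast_nonneg _)

lemma weight_le_sum_mul_degree {a : Fin n → ℝ} (ha : ∀ i, 0 ≤ a i) (α : Fin n →₀ ℕ) :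
    weight n a α ≤ (∑ i, a i) * α.degree := by
  rw [weight, Finsupp.degree_eq_sum, Nat.cast_sum, Finset.mul_sum]
  exact Finset.sum_le_sum fun i _ => mul_le_mul_of_nonneg_right
    (Finset.single_le_sum (fun j _ => ha j) (Finset.mem_univ i)) (Nat.cast_nonneg _)

lemma finite_setOf_weight_le {a : Fin n → ℝ} (ha : ∀ i, 0 < a i) (C : ℝ) :
    {α : Fin n →₀ ℕ | weight n a α ≤ C}.Finite := by
  refine (Set.finite_Iic (Finsupp.equivFunOnFinite.symm fun i => ⌊C / a i⌋₊)).subset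
    fun α (hα : weight n a α ≤ C) i => ?_
  have hi : a i * α i ≤ weight n a α :=
    Finset.single_le_sum (fun j _ => mul_nonneg (ha j).le (Nat.cast_nonneg _)) (Finset.mem_univ i)
  simpa using Nat.le_floor ((le_div_iff₀ (ha i)).2 (by linarith))

lemma continuous_weight (α : Fin n →₀ ℕ) : Continuous fun a : Fin n → ℝ => weight n a α := by
  unfold weight
  fun_prop

lemma weight_eq_weight_of_rat_relations {a b : Fin n → ℝ}
    (hab : ∀ u : Fin n → ℚ, ∑ i, (u i : ℝ) * a i = 0 → ∑ i, (u i : ℝ) * b i = 0)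
    {γ γ' : Fin n →₀ ℕ} (h : weight n a γ = weight n a γ') :
    weight n b γ = weight n b γ' := by
  have hsub : ∀ c : Fin n → ℝ,
      weight n c γ - weight n c γ' = ∑ i, (((γ i : ℚ) - γ' i : ℚ) : ℝ) * c i := by
    intro c
    simp only [weight, ← Finset.sum_sub_distrib]
    push_cast
    exact Finset.sum_congr rfl fun i _ => by ring
  have := hab _ (by rw [← hsub, h, sub_self])
  linarith [hsub b]

end Weight

section RationalApproximation

variable {ι : Type*} [Fintype ι]

/-- Write `a = C t` with `C` rational and `t` a `ℚ`-basis of the span of the `a i`; then `b = C q`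
for rational `q` close to `t` satisfies every rational relation of `a`. -/
lemma exists_rat_near_of_rat_relations (a : ι → ℝ) {p : (ι → ℝ) → Prop}
    (hp : ∀ᶠ x in 𝓝 a, p x) :
    ∃ b : ι → ℚ, p (fun i => b i) ∧
      ∀ u : ι → ℚ, ∑ i, (u i : ℝ) * a i = 0 → ∑ i, (u i : ℝ) * b i = 0 := by
  set V := Submodule.span ℚ (Set.range a)
  have : FiniteDimensional ℚ V := FiniteDimensional.span_of_finite ℚ (Set.finite_range a)
  let T := Module.finBasis ℚ V
  let v : ι → V := fun i => ⟨a i, Submodule.subset_span (Set.mem_range_self i)⟩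
  let G : (Fin (Module.finrank ℚ V) → ℝ) → ι → ℝ :=
    fun y i => ∑ j, (T.equivFun (v i) j : ℝ) * y j
  have hG : Continuous G := by fun_prop
  have hGT : G (fun j => T j) = a := by
    funext i
    conv_rhs => rw [show a i = (v i : ℝ) from rfl, ← T.sum_equivFun (v i)]
    simp only [G, AddSubmonoidClass.coe_finsetSum, SetLike.val_smul, Rat.smul_def]
  obtain ⟨q, hq⟩ := (DenseRange.piMap fun _ => Rat.denseRange_cast).mem_nhds
    (hG.continuousAt.preimage_mem_nhds (hGT ▸ hp))
  refine ⟨fun i => T.constr ℚ q (v i), ?_, fun u hu => ?_⟩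
  · convert (hq : p (G fun j => q j)) using 2 with i
    simp [G, Module.Basis.constr_apply_fintype, Pi.map, mul_comm]
  · have hv : ∑ i, u i • v i = 0 := Subtype.ext (by simpa [Rat.smul_def] using hu)
    have := congrArg (T.constr ℚ q) hv
    simp only [map_sum, map_smul, map_zero, smul_eq_mul] at this
    exact_mod_cast this

end RationalApproximation

section InitialForm

variable {K n} {a b : Fin n → ℝ} {f : MvPowerSeries (Fin n) K} {α : Fin n →₀ ℕ}

lemma exists_isMinOn_weight (ha : ∀ i, 0 < a i) (hf : f ≠ 0) :
    ∃ α ∈ supp K n f, IsMinOn (weight n a) (supp K n f) α := by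
  obtain ⟨α₀, hα₀⟩ := (ne_zero_iff_exists_coeff_ne_zero f).1 hf
  obtain ⟨α, ⟨hα, -⟩, hmin⟩ := Set.exists_min_image
    (supp K n f ∩ {γ | weight n a γ ≤ weight n a α₀}) (weight n a)
    ((finite_setOf_weight_le ha _).subset Set.inter_subset_right) ⟨α₀, hα₀, le_refl (weight n a α₀)⟩
  refine ⟨α, hα, isMinOn_iff.2 fun γ hγ => ?_⟩
  by_cases hγ₀ : weight n a γ ≤ weight n a α₀
  · exact hmin γ ⟨hγ, hγ₀⟩
  · exact (hmin α₀ ⟨hα₀, le_refl (weight n a α₀)⟩).trans (not_le.1 hγ₀).le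

lemma nu_eq_weight (hα : α ∈ supp K n f) (hmin : IsMinOn (weight n a) (supp K n f) α) :
    nu K n a f = weight n a α :=
  le_antisymm (sInf_le ⟨α, hα, rfl⟩) <| le_sInf <| Set.forall_mem_image.2 fun _ hγ =>
    EReal.coe_le_coe_iff.2 (isMinOn_iff.1 hmin _ hγ)

lemma coeff_initialForm_of_isMinOn (hα : α ∈ supp K n f)
    (hmin : IsMinOn (weight n a) (supp K n f) α) (γ : Fin n →₀ ℕ) :
    coeff γ (initialForm K n a f) = if weight n a γ = weight n a α then coeff γ f else 0 := by
  change (if _ then _ else _) = _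
  simp only [nu_eq_weight hα hmin, EReal.coe_eq_coe_iff]

lemma supp_initialForm_of_isMinOn (hα : α ∈ supp K n f)
    (hmin : IsMinOn (weight n a) (supp K n f) α) :
    supp K n (initialForm K n a f) = {γ ∈ supp K n f | weight n a γ = weight n a α} := by
  ext γ
  simp only [supp, Set.mem_ofPred_eq, coeff_initialForm_of_isMinOn hα hmin]
  split_ifs with h <;> simp [h]

lemma initialForm_eq_of_isMinOn (hα : α ∈ supp K n f)
    (hmin : IsMinOn (weight n a) (supp K n f) α)
    (htie : ∀ γ ∈ supp K n f, weight n a γ = weight n a α → weight n b γ = weight n b α)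
    (hlt : ∀ γ ∈ supp K n f, weight n a α < weight n a γ → weight n b α < weight n b γ) :
    initialForm K n a f = initialForm K n b f := by
  have hiff : ∀ γ ∈ supp K n f, weight n a γ = weight n a α ↔ weight n b γ = weight n b α :=
    fun γ hγ => ⟨htie γ hγ, fun hb => by_contra fun hne =>
      (hlt γ hγ (lt_of_le_of_ne (isMinOn_iff.1 hmin γ hγ) (Ne.symm hne))).ne' hb⟩
  have hminb : IsMinOn (weight n b) (supp K n f) α := isMinOn_iff.2 fun γ hγ => by
    rcases (isMinOn_iff.1 hmin γ hγ).eq_or_lt with h | h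
    · exact ((hiff γ hγ).1 h.symm).ge
    · exact (hlt γ hγ h).le
  ext γ
  rw [coeff_initialForm_of_isMinOn hα hmin, coeff_initialForm_of_isMinOn hα hminb]
  by_cases hγ : γ ∈ supp K n f
  · exact if_congr (hiff γ hγ) rfl rfl
  · simp [show coeff γ f = 0 from not_not.1 hγ]

/-- Take `b` rational, within a factor `2` of `a`, with the rational relations of `a`, and ordering
the finitely many exponents of `a`-weight at most `4 C` as `a` does; the factor `2` takes care of
all other exponents. -/
lemma exists_rat_initialForm_eq (ha : ∀ i, 0 < a i) (C : ℝ) :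
    ∃ b : Fin n → ℚ, (∀ i, 0 < b i) ∧
      ∀ (f : MvPowerSeries (Fin n) K) (α : Fin n →₀ ℕ), α ∈ supp K n f →
        IsMinOn (weight n a) (supp K n f) α → weight n a α ≤ C →
          initialForm K n a f = initialForm K n (fun i => b i) f := by
  set R := {γ : Fin n →₀ ℕ | weight n a γ ≤ 4 * C}
  have hR : R.Finite := finite_setOf_weight_le ha (4 * C)
  have hnear : ∀ᶠ x in 𝓝 a, (∀ i, a i < 2 * x i ∧ x i < 2 * a i) ∧
      ∀ γ ∈ R, ∀ γ' ∈ R, weight n a γ < weight n a γ' → weight n x γ < weight n x γ' := by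
    refine (eventually_all.2 fun i => ?_).and (hR.eventually_all.2 fun γ _ =>
      hR.eventually_all.2 fun γ' _ => ?_)
    · refine .and ?_ ?_
      · exact continuousAt_const.eventually_lt
          (continuous_const.mul (continuous_apply i)).continuousAt (by linarith [ha i])
      · exact (continuous_apply i).continuousAt.eventually_lt continuousAt_const
          (by linarith [ha i])
    · by_cases hlt : weight n a γ < weight n a γ'
      · filter_upwards [(continuous_weight γ).continuousAt.eventually_lt
          (continuous_weight γ').continuousAt hlt] with x hx _ using hx
      · exact .of_forall fun _ h => absurd h hlt
  obtain ⟨b, ⟨hbound, hstrict⟩, hrel⟩ := exists_rat_near_of_rat_relations a hnear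
  beta_reduce at hbound
  refine ⟨b, fun i => Rat.cast_pos.1 (show (0 : ℝ) < b i by linarith [(hbound i).1, ha i]),
    fun f α hα hmin hC => initialForm_eq_of_isMinOn hα hmin
      (fun γ _ h => weight_eq_weight_of_rat_relations hrel h) fun γ _ hlt => ?_⟩
  have hαR : α ∈ R := show weight n a α ≤ 4 * C by linarith [weight_nonneg (fun i => (ha i).le) α]
  by_cases hγR : γ ∈ R
  · exact hstrict α hαR γ hγR hlt
  · have hα2 := weight_le_mul_weight (fun i => (hbound i).2.le) α
    have hγ2 := weight_le_mul_weight (fun i => (hbound i).1.le) γ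
    linarith [show 4 * C < weight n a γ from not_le.1 hγR]

end InitialForm

section LeadingMonomial

variable {K n} {r : (Fin n →₀ ℕ) → (Fin n →₀ ℕ) → Prop} {a b : Fin n → ℝ}
  {f : MvPowerSeries (Fin n) K}

lemma exists_max_of_isStrictTotalOrder {τ : Type*} (r : τ → τ → Prop) [IsStrictTotalOrder τ r]
    {S : Set τ} (hfin : S.Finite) (hne : S.Nonempty) :
    ∃ β ∈ S, ∀ γ ∈ S, γ = β ∨ r γ β := by
  classical
  let : LinearOrder τ := linearOrderOfSTO r
  exact Set.exists_max_image S id hfin hne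

lemma exponent_mem_supp (hr : IsWellOrder (Fin n →₀ ℕ) r) (ha : ∀ i, 0 < a i) (hf : f ≠ 0) :
    exponent K n r a f ∈ supp K n f := by
  obtain ⟨α, hα, hmin⟩ := exists_isMinOn_weight ha hf
  have hsupp := supp_initialForm_of_isMinOn hα hmin
  have hfin : (supp K n (initialForm K n a f)).Finite :=
    hsupp ▸ (finite_setOf_weight_le ha (weight n a α)).subset fun γ hγ => hγ.2.le
  have := hr
  have hmax := exists_max_of_isStrictTotalOrder r hfin ⟨α, hsupp ▸ ⟨hα, rfl⟩⟩
  rw [exponent, dif_pos hmax]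
  exact (hsupp.subset hmax.choose_spec.1).1

lemma leadMon_eq_of_initialForm_eq (h : initialForm K n a f = initialForm K n b f) :
    leadMon K n r a f = leadMon K n r b f := by
  unfold leadMon exponent
  rw [h]

lemma leadMon_eq_smul_monomial :
    leadMon K n r a f = coeff (exponent K n r a f) f • monomial (exponent K n r a f) (1 : K) := by
  rw [leadMon, ← map_smul, smul_eq_mul, mul_one]

lemma monomial_ne_zero {α : Fin n →₀ ℕ} {c : K} (hc : c ≠ 0) :
    (monomial α c : MvPowerSeries (Fin n) K) ≠ 0 := fun h =>
  hc (by simpa using congrArg (coeff α) h)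

lemma leadMon_monomial (hr : IsWellOrder (Fin n →₀ ℕ) r) (ha : ∀ i, 0 < a i)
    {α : Fin n →₀ ℕ} {c : K} (hc : c ≠ 0) : leadMon K n r a (monomial α c) = monomial α c := by
  have hexp : exponent K n r a (monomial α c) = α := by
    by_contra h
    exact exponent_mem_supp hr ha (monomial_ne_zero hc) (coeff_monomial_ne h c)
  rw [leadMon, hexp, coeff_monomial_same]

end LeadingMonomial

section ClosedAdjoin

variable {K n} {S T : Set (MvPowerSeries (Fin n) K)}

lemma subset_closedAdjoin (S : Set (MvPowerSeries (Fin n) K)) :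
    S ⊆ closedAdjoin K n S := fun x hx _ =>
  ⟨x, Algebra.subset_adjoin hx, by simp⟩

lemma mem_closedAdjoin_of_forall_sub_mem {x : MvPowerSeries (Fin n) K}
    (h : ∀ N : ℕ, ∃ g ∈ closedAdjoin K n S, x - g ∈ mIdeal K n ^ N) :
    x ∈ closedAdjoin K n S := fun N => by
  obtain ⟨g, hg, hxg⟩ := h N
  obtain ⟨p, hp, hgp⟩ := hg N
  exact ⟨p, hp, by simpa using Ideal.add_mem _ hxg hgp⟩

lemma closedAdjoin_le (h : S ⊆ closedAdjoin K n T) : closedAdjoin K n S ≤ closedAdjoin K n T :=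
  fun x hx => mem_closedAdjoin_of_forall_sub_mem fun N => by
    obtain ⟨g, hg, hxg⟩ := hx N
    exact ⟨g, Algebra.adjoin_le h hg, hxg⟩

lemma monomial_one_mem_mIdeal_pow (α : Fin n →₀ ℕ) :
    monomial α (1 : K) ∈ mIdeal K n ^ α.degree := by
  rw [monomial_one_eq, Finsupp.prod, Finsupp.degree_apply, ← Finset.prod_pow_eq_pow_sum]
  exact Ideal.prod_mem_prod fun i _ => Ideal.pow_mem_pow (Ideal.subset_span (Set.mem_range_self i)) _

lemma monomial_one_mem_mIdeal_pow_of_lt_weight {a : Fin n → ℝ} (ha : ∀ i, 0 ≤ a i) {N : ℕ}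
    {α : Fin n →₀ ℕ} (h : (∑ i, a i) * N < weight n a α) :
    monomial α (1 : K) ∈ mIdeal K n ^ N := by
  have hN : (N : ℝ) < α.degree := lt_of_mul_lt_mul_left
    (h.trans_le (weight_le_sum_mul_degree ha α)) (Finset.sum_nonneg fun i _ => ha i)
  exact Ideal.pow_le_pow_right (Nat.cast_lt.1 hN).le (monomial_one_mem_mIdeal_pow α)

/-- The images of the powers of the maximal ideal in the artinian `A`-module `F ⧸ A` stabilise,
and closedness of `A` puts the stable power inside `A`. -/
lemma exists_mIdeal_pow_subset (hlen : FiniteColength K n (closedAdjoin K n S)) :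
    ∃ N : ℕ, ∀ z ∈ mIdeal K n ^ N, z ∈ closedAdjoin K n S := by
  set A := closedAdjoin K n S
  let p := LinearMap.range (Algebra.linearMap A (MvPowerSeries (Fin n) K))
  have : IsArtinian A (MvPowerSeries (Fin n) K ⧸ p) :=
    (isFiniteLength_iff_isNoetherian_isArtinian.1 hlen).2
  let chain : ℕ →o (Submodule A (MvPowerSeries (Fin n) K ⧸ p))ᵒᵈ :=
    ⟨fun k => OrderDual.toDual (((mIdeal K n ^ k).restrictScalars A).map p.mkQ),
      fun _ _ hkl => Submodule.map_mono (Ideal.pow_le_pow_right hkl)⟩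
  obtain ⟨N, hN⟩ := IsArtinian.monotone_stabilizes chain
  refine ⟨N, fun z hz => mem_closedAdjoin_of_forall_sub_mem fun M => ?_⟩
  have hzN : p.mkQ z ∈ OrderDual.ofDual (chain N) := ⟨z, hz, rfl⟩
  rw [hN (max M N) (le_max_right M N)] at hzN
  obtain ⟨w, hw, hwz⟩ := hzN
  obtain ⟨g, hg⟩ := (Submodule.Quotient.eq p).1 hwz.symm
  refine ⟨z - w, hg ▸ g.2, ?_⟩
  simpa using Ideal.pow_le_pow_right (le_max_left M N) hw

end ClosedAdjoin

section LeadAlgebra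

variable {K n} {r : (Fin n →₀ ℕ) → (Fin n →₀ ℕ) → Prop} {a b : Fin n → ℝ}
  {A : Set (MvPowerSeries (Fin n) K)}

lemma leadMon_mem_leadAlgebra (hr : IsWellOrder (Fin n →₀ ℕ) r) (hb : ∀ i, 0 < b i)
    {p : MvPowerSeries (Fin n) K} (hmon : monomial (exponent K n r a p) (1 : K) ∈ A) :
    leadMon K n r a p ∈ leadAlgebra K n r b A := by
  have hgen : monomial (exponent K n r a p) (1 : K) ∈ leadAlgebra K n r b A := subset_closedAdjoin _
    ⟨_, hmon, monomial_ne_zero one_ne_zero, leadMon_monomial hr hb one_ne_zero⟩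
  rw [leadMon_eq_smul_monomial]
  exact Subalgebra.smul_mem _ hgen _

lemma leadAlgebra_le_leadAlgebra (hr : IsWellOrder (Fin n →₀ ℕ) r) (ha : ∀ i, 0 < a i)
    (hb : ∀ i, 0 < b i)
    (h : ∀ p ∈ A, p ≠ 0 → initialForm K n a p = initialForm K n b p ∨
      ∀ γ ∈ supp K n p, monomial γ (1 : K) ∈ A) :
    leadAlgebra K n r a A ≤ leadAlgebra K n r b A := by
  refine closedAdjoin_le ?_
  rintro _ ⟨p, hp, hp0, rfl⟩
  rcases h p hp hp0 with h | h
  · rw [leadMon_eq_of_initialForm_eq h]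
    exact subset_closedAdjoin _ ⟨p, hp, hp0, rfl⟩
  · exact leadMon_mem_leadAlgebra hr hb (h _ (exponent_mem_supp hr ha hp0))

end LeadAlgebra

theorem leadAlgebra_rational
    (r : (Fin n →₀ ℕ) → (Fin n →₀ ℕ) → Prop) (hr : IsWellOrder (Fin n →₀ ℕ) r)
    (s : ℕ) (f : Fin s → MvPowerSeries (Fin n) K)
    (A : Subalgebra K (MvPowerSeries (Fin n) K)) (hA : A = closedAdjoin K n (Set.range f))
    (hlen : FiniteColength K n A)
    (a : Fin n → ℝ) (ha : ∀ i, 0 < a i) :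
    ∃ b : Fin n → ℚ, (∀ i, 0 < b i) ∧
      leadAlgebra K n r a (A : Set (MvPowerSeries (Fin n) K)) =
        leadAlgebra K n r (fun i => (b i : ℝ)) (A : Set (MvPowerSeries (Fin n) K)) := by
  subst hA
  obtain ⟨N, hN⟩ := exists_mIdeal_pow_subset hlen
  obtain ⟨b, hb, hab⟩ := exists_rat_initialForm_eq (K := K) ha ((∑ i, a i) * N)
  have hb' : ∀ i, 0 < (b i : ℝ) := fun i => Rat.cast_pos.2 (hb i)
  have hcases : ∀ p ∈ closedAdjoin K n (Set.range f), p ≠ 0 →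
      initialForm K n a p = initialForm K n (fun i => b i) p ∨
        ∀ γ ∈ supp K n p, monomial γ (1 : K) ∈ closedAdjoin K n (Set.range f) := by
    intro p _ hp
    obtain ⟨α, hα, hmin⟩ := exists_isMinOn_weight ha hp
    by_cases hC : weight n a α ≤ (∑ i, a i) * N
    · exact .inl (hab p α hα hmin hC)
    · exact .inr fun γ hγ => hN _ <| monomial_one_mem_mIdeal_pow_of_lt_weight (fun i => (ha i).le)
        ((not_le.1 hC).trans_le (isMinOn_iff.1 hmin γ hγ))
  exact ⟨b, hb, le_antisymm (leadAlgebra_le_leadAlgebra hr ha hb' hcases)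
    (leadAlgebra_le_leadAlgebra hr hb' ha fun p hp hp0 => (hcases p hp hp0).imp Eq.symm id)⟩

end CanonicalFan
end
end

section
/- Let K be a field and A = K[[x+y, xy, xy²]] ⊆ K[[x,y]]. Then for every integer n ≥ 1, the monomial x y^n belongs to A. -/
noncomputable section

namespace CanonicalFan

open MvPowerSeries

variable (K : Type*) [Field K] (n : ℕ)

theorem adjoin_le_closedAdjoin (S : Set (MvPowerSeries (Fin n) K)) :
    Algebra.adjoin K S ≤ closedAdjoin K n S :=
  fun f hf N => ⟨f, hf, by simp⟩

theorem _root_.Subalgebra.mul_pow_succ_mem {R A : Type*} [CommRing R] [CommRing A] [Algebra R A]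
    {S : Subalgebra R A} {x y : A} (hsum : x + y ∈ S) (hprod : x * y ∈ S)
    (hsq : x * y ^ 2 ∈ S) (k : ℕ) : x * y ^ (k + 1) ∈ S := by
  induction k using Nat.twoStepInduction with
  | zero => simpa using hprod
  | one => exact hsq
  | more k ih₀ ih₁ =>
    have hrec : x * y ^ (k + 2 + 1) =
        (x + y) * (x * y ^ (k + 1 + 1)) - x * y * (x * y ^ (k + 1)) := by ring
    rw [hrec]
    exact sub_mem (mul_mem hsum ih₁) (mul_mem hprod ih₀)

/-- in `A = K[[x+y, xy, xy²]] ⊆ K[[x,y]]`, the monomial `x yⁿ` belongs to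
`A` for every `n ≥ 1`. -/
theorem xyn_mem
    (m : ℕ) (hm : 1 ≤ m) :
    (MvPowerSeries.X 0 * MvPowerSeries.X 1 ^ m : MvPowerSeries (Fin 2) K) ∈
      closedAdjoin K 2 {MvPowerSeries.X 0 + MvPowerSeries.X 1,
        MvPowerSeries.X 0 * MvPowerSeries.X 1,
        MvPowerSeries.X 0 * MvPowerSeries.X 1 ^ 2} := by
  obtain ⟨k, rfl⟩ := Nat.exists_eq_add_of_le' hm
  refine adjoin_le_closedAdjoin K 2 _ (Subalgebra.mul_pow_succ_mem ?_ ?_ ?_ k) <;>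
    exact Algebra.subset_adjoin (by simp)

end CanonicalFan
end
end
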